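/- Let $M \subseteq \mathbb{Z}^n$ be a positive normal affine monoid with $\mathrm{gp}(M) = \mathbb{Z}^n$ and support forms $\sigma_1, \dots, \sigma_s$. For each index $i$ there exists $z \in \mathrm{relint}(M)$ with $\sigma_i(z) = 1$. -/

import Mathlib

/-!
Choose an integral `u` with `σⱼ u > 0` for all `j` (a sum of elements of `M`, one for each form,
which exist because `gp M = ℤⁿ` and no `σⱼ` vanishes) and, by Bézout, an integral `y` with
`σᵢ y = 1`. Irredundancy of `σᵢ` gives a real point violating `σᵢ ≥ 0` only; pushing it towards
`u` and rounding gives a lattice point `v` with `σᵢ v < 0 < σⱼ v` for `j ≠ i`, so that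
`w = σᵢ(u) v - σᵢ(v) u` lies in the relative interior of the facet `σᵢ = 0`. Then `z = y + K w`
satisfies `σᵢ z = 1` and `σⱼ z > 0` for `K ≫ 0`. Finally `z ∈ cone M ∩ ℤⁿ` lies in `M` by
normality: by conic Carathéodory `z` is a nonnegative combination of linearly independent
elements of `M`, whose coefficients are then unique, hence rational.
-/

open scoped BigOperators

noncomputable section

/-- The canonical map `ℤⁿ → ℝⁿ`. -/
def toR {n : ℕ} (z : Fin n → ℤ) : Fin n → ℝ := fun i => (z i : ℝ)

/-- The real extension of an integral linear form. -/
def realForm {n : ℕ} (ℓ : (Fin n → ℤ) →ₗ[ℤ] ℤ) (x : Fin n → ℝ) : ℝ :=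
  ∑ k, (ℓ (Pi.single k 1) : ℝ) * x k

/-- The cone in `ℝⁿ` generated by a set of lattice points. -/
def coneOf {n : ℕ} (M : Set (Fin n → ℤ)) : Set (Fin n → ℝ) :=
  {x | ∃ (t : Finset (Fin n → ℤ)) (c : (Fin n → ℤ) → ℝ),
    (↑t : Set (Fin n → ℤ)) ⊆ M ∧ (∀ a, 0 ≤ c a) ∧ x = ∑ a ∈ t, c a • toR a}

/-- `relint M` with respect to the support forms `σ`. -/
def relintM {n s : ℕ} (M : AddSubmonoid (Fin n → ℤ))
    (σ : Fin s → ((Fin n → ℤ) →ₗ[ℤ] ℤ)) : Set (Fin n → ℤ) :=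
  {a | a ∈ M ∧ ∀ i, 0 < σ i a}

lemma realForm_toR {n : ℕ} (ℓ : (Fin n → ℤ) →ₗ[ℤ] ℤ) (z : Fin n → ℤ) :
    realForm ℓ (toR z) = ℓ z := by
  conv_rhs => rw [pi_eq_sum_univ' z]
  simp only [map_sum, map_zsmul, smul_eq_mul, Int.cast_sum, Int.cast_mul, realForm, toR, mul_comm]

lemma realForm_add {n : ℕ} (ℓ : (Fin n → ℤ) →ₗ[ℤ] ℤ) (x y : Fin n → ℝ) :
    realForm ℓ (x + y) = realForm ℓ x + realForm ℓ y := by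
  simp [realForm, mul_add, Finset.sum_add_distrib]

lemma realForm_smul {n : ℕ} (ℓ : (Fin n → ℤ) →ₗ[ℤ] ℤ) (c : ℝ) (x : Fin n → ℝ) :
    realForm ℓ (c • x) = c * realForm ℓ x := by
  simp [realForm, Finset.mul_sum, mul_left_comm]

lemma continuous_realForm {n : ℕ} (ℓ : (Fin n → ℤ) →ₗ[ℤ] ℤ) : Continuous (realForm ℓ) := by
  unfold realForm; fun_prop

lemma toR_injective {n : ℕ} : Function.Injective (toR (n := n)) :=
  fun _ _ h => funext fun k => Int.cast_injective (congrFun h k)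

lemma toR_zsmul {n : ℕ} (m : ℤ) (z : Fin n → ℤ) : toR (m • z) = (m : ℝ) • toR z := by
  ext k; simp [toR]

lemma toR_sum {n : ℕ} {ι : Type*} (t : Finset ι) (v : ι → Fin n → ℤ) :
    toR (∑ a ∈ t, v a) = ∑ a ∈ t, toR (v a) := by
  ext k; simp [toR]

lemma exists_apply_eq_one_of_gcd_eq_one {n : ℕ} (ℓ : (Fin n → ℤ) →ₗ[ℤ] ℤ)
    (h : Finset.univ.gcd (fun k => ℓ (Pi.single k 1)) = 1) : ∃ y, ℓ y = 1 := by
  obtain ⟨g, hg⟩ := Finset.univ.gcd_eq_sum_mul (fun k => ℓ (Pi.single k 1))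
  refine ⟨∑ k, g k • Pi.single k 1, ?_⟩
  simpa only [map_sum, map_zsmul, smul_eq_mul, mul_comm] using hg.symm.trans h

lemma exists_toR_mem_of_isOpen {n : ℕ} {U : Set (Fin n → ℝ)} (hU : IsOpen U)
    (hsmul : ∀ c : ℝ, 0 < c → ∀ x ∈ U, c • x ∈ U) (hne : U.Nonempty) :
    ∃ v : Fin n → ℤ, toR v ∈ U := by
  obtain ⟨x, hx⟩ := hne
  obtain ⟨r, hr, hball⟩ := Metric.isOpen_iff.mp hU x hx
  obtain ⟨N, hN⟩ := exists_nat_gt r⁻¹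
  have hNpos : (0 : ℝ) < N := (inv_pos.mpr hr).trans hN
  have hNr : (N : ℝ)⁻¹ < r := inv_lt_of_inv_lt₀ hr hN
  set v : Fin n → ℤ := fun k => round (N * x k)
  have hmem : (N : ℝ)⁻¹ • toR v ∈ U := by
    refine hball ((dist_pi_lt_iff hr).mpr fun k => ?_)
    have hround : |(N * x k : ℝ) - round (N * x k)| ≤ 1 / 2 := abs_sub_round _
    calc dist ((N : ℝ)⁻¹ * round (N * x k)) (x k)
        = (N : ℝ)⁻¹ * |N * x k - round (N * x k)| := by
          rw [Real.dist_eq, abs_sub_comm, ← abs_of_pos (inv_pos.mpr hNpos), ← abs_mul,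
            abs_of_pos (inv_pos.mpr hNpos), mul_sub, inv_mul_cancel_left₀ hNpos.ne']
      _ ≤ (N : ℝ)⁻¹ * (1 / 2) := by gcongr
      _ < r := by linarith
  exact ⟨v, by simpa [smul_smul, hNpos.ne'] using hsmul N hNpos _ hmem⟩

section ConicCaratheodory

variable {𝕜 V ι : Type*} [Field 𝕜] [LinearOrder 𝕜] [IsStrictOrderedRing 𝕜]
  [AddCommGroup V] [Module 𝕜 V] {v : ι → V}

lemma exists_pos_of_not_linearIndepOn {t : Finset ι} (ht : ¬LinearIndepOn 𝕜 v t) :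
    ∃ e : ι → 𝕜, ∑ a ∈ t, e a • v a = 0 ∧ ∃ a ∈ t, 0 < e a := by
  obtain ⟨f, hf, a, ha, hfa⟩ := not_linearIndepOn_finset_iff.mp ht
  rcases hfa.lt_or_gt with hneg | hpos
  · exact ⟨-f, by simp [neg_smul, hf], a, ha, neg_pos.mpr hneg⟩
  · exact ⟨f, hf, a, ha, hpos⟩

/-- Move along a linear relation until the first coefficient reaches zero. -/
lemma exists_nonneg_sum_erase_eq_of_not_linearIndepOn [DecidableEq ι] {t : Finset ι}
    (ht : ¬LinearIndepOn 𝕜 v t) {c : ι → 𝕜} (hc : ∀ a ∈ t, 0 ≤ c a) :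
    ∃ b ∈ t, ∃ c' : ι → 𝕜, (∀ a ∈ t.erase b, 0 ≤ c' a) ∧
      ∑ a ∈ t.erase b, c' a • v a = ∑ a ∈ t, c a • v a := by
  obtain ⟨e, he, a₀, ha₀, hea₀⟩ := exists_pos_of_not_linearIndepOn ht
  obtain ⟨b, hbP, hbmin⟩ := Finset.exists_min_image (t.filter (0 < e ·)) (fun a => c a / e a)
    ⟨a₀, Finset.mem_filter.mpr ⟨ha₀, hea₀⟩⟩
  obtain ⟨hb, heb⟩ := Finset.mem_filter.mp hbP
  set r := c b / e b
  have hr : 0 ≤ r := div_nonneg (hc b hb) heb.le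
  have hc' : ∀ a ∈ t, 0 ≤ c a - r * e a := by
    intro a ha
    rcases lt_or_ge 0 (e a) with hea | hea
    · have := (le_div_iff₀ hea).mp (hbmin a (Finset.mem_filter.mpr ⟨ha, hea⟩))
      linarith
    · nlinarith [hc a ha]
  refine ⟨b, hb, fun a => c a - r * e a, fun a ha => hc' a (Finset.mem_of_mem_erase ha), ?_⟩
  have hcb : c b - r * e b = 0 := by simp [r, heb.ne']
  rw [Finset.sum_erase _ (by simp only [hcb, zero_smul])]
  simp only [sub_smul, mul_smul, Finset.sum_sub_distrib, ← Finset.smul_sum, he, smul_zero,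
    sub_zero]

theorem exists_linearIndepOn_subset_nonneg_sum_eq (t : Finset ι) (c : ι → 𝕜)
    (hc : ∀ a ∈ t, 0 ≤ c a) :
    ∃ t' ⊆ t, LinearIndepOn 𝕜 v t' ∧ ∃ c' : ι → 𝕜, (∀ a ∈ t', 0 ≤ c' a) ∧
      ∑ a ∈ t', c' a • v a = ∑ a ∈ t, c a • v a := by
  classical
  induction t using Finset.strongInduction generalizing c with
  | H t ih =>
    by_cases hli : LinearIndepOn 𝕜 v t
    · exact ⟨t, subset_rfl, hli, c, hc, rfl⟩
    obtain ⟨b, hb, c', hc', hsum⟩ := exists_nonneg_sum_erase_eq_of_not_linearIndepOn hli hc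
    obtain ⟨t', ht', hli', c'', hc'', hsum'⟩ := ih _ (Finset.erase_ssubset hb) c' hc'
    exact ⟨t', ht'.trans (Finset.erase_subset b t), hli', c'', hc'', hsum'.trans hsum⟩

end ConicCaratheodory

/-- A `ℚ`-linear retraction `ℝ → ℚ` turns a real solution of an integral linear system into a
rational one; linear independence makes the solution unique. -/
lemma exists_rat_eq_of_linearIndepOn {n : ℕ} {t : Finset (Fin n → ℤ)}
    (ht : LinearIndepOn ℝ toR (t : Set (Fin n → ℤ))) {c : (Fin n → ℤ) → ℝ} {z : Fin n → ℤ}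
    (hz : ∑ a ∈ t, c a • toR a = toR z) :
    ∃ q : (Fin n → ℤ) → ℚ, ∀ a ∈ t, (q a : ℝ) = c a := by
  obtain ⟨π, hπ⟩ := (Algebra.linearMap ℚ ℝ).exists_leftInverse_of_injective
    (LinearMap.ker_eq_bot.mpr Rat.cast_injective)
  have hπ_cast (q : ℚ) : π q = q := LinearMap.congr_fun hπ q
  refine ⟨fun a => π (c a), fun a ha => ?_⟩
  have hrat : ∑ a ∈ t, ((π (c a) : ℚ) : ℝ) • toR a = toR z := by
    ext k
    have hk := congrArg π (congrFun hz k)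
    simp only [Finset.sum_apply, Pi.smul_apply, smul_eq_mul, toR, map_sum] at hk ⊢
    have : ∀ a, π (c a * (a k : ℝ)) = π (c a) * a k := fun a => by
      rw [mul_comm, ← zsmul_eq_mul, map_zsmul, zsmul_eq_mul, mul_comm]
    simp only [this] at hk
    rw [show ((z k : ℝ)) = ((z k : ℚ) : ℝ) by norm_cast, hπ_cast] at hk
    exact_mod_cast hk
  have := linearIndepOn_finset_iff.mp ht (fun a => (π (c a) : ℝ) - c a)
    (by simp only [sub_smul, Finset.sum_sub_distrib, hrat, hz, sub_self]) a ha
  exact sub_eq_zero.mp this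

lemma exists_nat_mul_eq_natCast {ι : Type*} (t : Finset ι) (q : ι → ℚ)
    (hq : ∀ a ∈ t, 0 ≤ q a) :
    ∃ D : ℕ, 0 < D ∧ ∃ m : ι → ℕ, ∀ a ∈ t, (m a : ℚ) = D * q a := by
  classical
  refine ⟨∏ a ∈ t, (q a).den, Finset.prod_pos fun a _ => (q a).pos,
    fun a => (∏ b ∈ t.erase a, (q b).den) * (q a).num.toNat, fun a ha => ?_⟩
  rw [← Finset.mul_prod_erase t _ ha]
  have hnum : ((q a).num.toNat : ℚ) = (q a).den * q a := by
    rw [Rat.den_mul_eq_num]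
    exact_mod_cast Int.toNat_of_nonneg (Rat.num_nonneg.mpr (hq a ha))
  push_cast
  rw [hnum]
  ring

lemma mem_of_toR_mem_coneOf {n : ℕ} {M : AddSubmonoid (Fin n → ℤ)}
    (hnorm : ∀ (x : Fin n → ℤ) (k : ℕ), 0 < k → (k : ℤ) • x ∈ M → x ∈ M) {z : Fin n → ℤ}
    (hz : toR z ∈ coneOf (M : Set (Fin n → ℤ))) : z ∈ M := by
  obtain ⟨t, c, htM, hc, hzc⟩ := hz
  obtain ⟨t', ht't, hli, c', hc', hsum⟩ :=
    exists_linearIndepOn_subset_nonneg_sum_eq (v := toR) t c fun a _ => hc a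
  obtain ⟨q, hq⟩ := exists_rat_eq_of_linearIndepOn hli (hsum.trans hzc.symm)
  obtain ⟨D, hD, m, hm⟩ := exists_nat_mul_eq_natCast t' q fun a ha => by
    exact_mod_cast (hq a ha).symm ▸ hc' a ha
  have hDz : (D : ℤ) • z = ∑ a ∈ t', (m a : ℤ) • a := by
    apply toR_injective
    have hma : ∀ a ∈ t', (m a : ℝ) = D * c' a := fun a ha => by
      rw [← hq a ha]; exact_mod_cast hm a ha
    simp only [toR_sum, toR_zsmul, hzc, ← hsum, Finset.smul_sum, smul_smul]
    exact Finset.sum_congr rfl fun a ha => by push_cast; rw [hma a ha]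
  refine hnorm z D hD ?_
  rw [hDz]
  exact AddSubmonoid.sum_mem M fun a ha => by
    rw [natCast_zsmul]; exact nsmul_mem (htM (ht't ha)) _

section SupportForms

variable {n s : ℕ} {M : AddSubmonoid (Fin n → ℤ)} {σ : Fin s → ((Fin n → ℤ) →ₗ[ℤ] ℤ)}

lemma toR_mem_coneOf {a : Fin n → ℤ} (ha : a ∈ M) : toR a ∈ coneOf (M : Set (Fin n → ℤ)) :=
  ⟨{a}, fun _ => 1, by simpa using ha, fun _ => zero_le_one, by simp⟩

lemma apply_nonneg_of_mem
    (hcone : coneOf (M : Set (Fin n → ℤ)) ⊆ {x | ∀ i, 0 ≤ realForm (σ i) x})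
    {a : Fin n → ℤ} (ha : a ∈ M) (j : Fin s) : 0 ≤ σ j a := by
  have := hcone (toR_mem_coneOf ha) j
  rw [realForm_toR] at this
  exact_mod_cast this

lemma exists_mem_apply_ne_zero (hgp : AddSubgroup.closure (M : Set (Fin n → ℤ)) = ⊤)
    {ℓ : (Fin n → ℤ) →ₗ[ℤ] ℤ} (hℓ : ℓ ≠ 0) : ∃ m ∈ M, ℓ m ≠ 0 := by
  by_contra! hvan
  refine hℓ (LinearMap.ext fun x => ?_)
  have hle : AddSubgroup.closure (M : Set (Fin n → ℤ)) ≤ ℓ.toAddMonoidHom.ker :=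
    (AddSubgroup.closure_le _).mpr hvan
  exact hle (hgp ▸ AddSubgroup.mem_top x)

lemma relintM_nonempty
    (hcone : coneOf (M : Set (Fin n → ℤ)) ⊆ {x | ∀ i, 0 ≤ realForm (σ i) x})
    (hgp : AddSubgroup.closure (M : Set (Fin n → ℤ)) = ⊤) (hσ : ∀ j, σ j ≠ 0) :
    (relintM M σ).Nonempty := by
  have hpos (j : Fin s) : ∃ m ∈ M, 0 < σ j m := by
    obtain ⟨m, hm, hσm⟩ := exists_mem_apply_ne_zero hgp (hσ j)
    exact ⟨m, hm, (apply_nonneg_of_mem hcone hm j).lt_of_ne' hσm⟩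
  choose m hmM hm using hpos
  refine ⟨∑ k, m k, AddSubmonoid.sum_mem M fun k _ => hmM k, fun j => ?_⟩
  rw [map_sum]
  exact (hm j).trans_le <| Finset.single_le_sum (fun k _ => apply_nonneg_of_mem hcone (hmM k) j)
    (Finset.mem_univ j)

end SupportForms

lemma exists_forall_pos_add_smul {n s : ℕ} (σ : Fin s → ((Fin n → ℤ) →ₗ[ℤ] ℤ))
    (y w : Fin n → ℤ) : ∃ K : ℤ, ∀ j, 0 < σ j w → 0 < σ j (y + K • w) := by
  refine ⟨1 + ∑ j, |σ j y|, fun j hj => ?_⟩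
  have hy : |σ j y| ≤ ∑ j, |σ j y| :=
    Finset.single_le_sum (f := fun j => |σ j y|) (fun _ _ => abs_nonneg _) (Finset.mem_univ j)
  have hK : 1 + ∑ j, |σ j y| ≤ (1 + ∑ j, |σ j y|) * σ j w :=
    le_mul_of_one_le_right (by positivity) hj
  rw [map_add, map_zsmul, smul_eq_mul]
  linarith [neg_abs_le (σ j y)]

section Facet

variable {n s : ℕ} (σ : Fin s → ((Fin n → ℤ) →ₗ[ℤ] ℤ)) {i : Fin s} {u : Fin n → ℤ}
  (hu : ∀ j, 0 < σ j u) {x : Fin n → ℝ} (hx : ∀ j, j ≠ i → 0 ≤ realForm (σ j) x)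
  (hxi : realForm (σ i) x < 0)
include hu hx hxi

lemma exists_apply_neg_and_apply_pos :
    ∃ v : Fin n → ℤ, σ i v < 0 ∧ ∀ j, j ≠ i → 0 < σ j v := by
  set U := {p : Fin n → ℝ | realForm (σ i) p < 0 ∧ ∀ j, j ≠ i → 0 < realForm (σ j) p}
  have hUopen : IsOpen U := by
    have hU : U = {p | realForm (σ i) p < 0} ∩ ⋂ j, ⋂ (_ : j ≠ i), {p | 0 < realForm (σ j) p} := by
      ext; simp [U]
    rw [hU]
    exact (isOpen_lt (continuous_realForm _) continuous_const).inter <|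
      isOpen_iInter_of_finite fun j => isOpen_iInter_of_finite fun _ =>
        isOpen_lt continuous_const (continuous_realForm _)
  have hUsmul : ∀ c : ℝ, 0 < c → ∀ p ∈ U, c • p ∈ U := by
    rintro c hc p ⟨hpi, hpj⟩
    simp only [U, Set.mem_ofPred_eq, realForm_smul]
    exact ⟨mul_neg_of_pos_of_neg hc hpi, fun j hj => mul_pos hc (hpj j hj)⟩
  have hp : (2 * σ i u : ℝ) • x + (-realForm (σ i) x) • toR u ∈ U := by
    have hui : (0 : ℝ) < σ i u := by exact_mod_cast hu i
    simp only [U, Set.mem_ofPred_eq, realForm_add, realForm_smul, realForm_toR]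
    refine ⟨by nlinarith, fun j hj => ?_⟩
    have huj : (0 : ℝ) < σ j u := by exact_mod_cast hu j
    nlinarith [hx j hj]
  obtain ⟨v, hvi, hvj⟩ := exists_toR_mem_of_isOpen hUopen hUsmul ⟨_, hp⟩
  refine ⟨v, ?_, fun j hj => ?_⟩
  · rw [realForm_toR] at hvi
    exact_mod_cast hvi
  · have := hvj j hj
    rw [realForm_toR] at this
    exact_mod_cast this

/-- `w` is the point where the segment from `u` to `v` meets the facet `σ i = 0`, scaled to be
integral. -/
lemma exists_apply_eq_zero_and_apply_pos :
    ∃ w : Fin n → ℤ, σ i w = 0 ∧ ∀ j, j ≠ i → 0 < σ j w := by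
  obtain ⟨v, hvi, hvj⟩ := exists_apply_neg_and_apply_pos σ hu hx hxi
  refine ⟨σ i u • v - σ i v • u, ?_, fun j hj => ?_⟩
  · simp only [map_sub, map_zsmul, smul_eq_mul, mul_comm, sub_self]
  · simp only [map_sub, map_zsmul, smul_eq_mul]
    nlinarith [hu i, hu j, hvj j hj]

end Facet

theorem exists_relint_point_with_form_one_general
    (n s : ℕ) (M : AddSubmonoid (Fin n → ℤ))
    (hnorm : ∀ (x : Fin n → ℤ) (k : ℕ), 0 < k → (k : ℤ) • x ∈ M → x ∈ M)
    (hgp : AddSubgroup.closure (M : Set (Fin n → ℤ)) = ⊤)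
    (σ : Fin s → ((Fin n → ℤ) →ₗ[ℤ] ℤ))
    (hcone : coneOf (M : Set (Fin n → ℤ)) = {x | ∀ i, 0 ≤ realForm (σ i) x})
    (hirr : ∀ i, ∃ x : Fin n → ℝ,
      (∀ j, j ≠ i → 0 ≤ realForm (σ j) x) ∧ realForm (σ i) x < 0)
    (hprim : ∀ i, Finset.univ.gcd (fun k => σ i (Pi.single k 1)) = 1) :
    ∀ i : Fin s, ∃ z ∈ relintM M σ, σ i z = 1 := by
  intro i
  have hσ : ∀ j, σ j ≠ 0 := fun j hj => by
    obtain ⟨x, -, hx⟩ := hirr j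
    simp [hj, realForm] at hx
  obtain ⟨u, -, hu⟩ := relintM_nonempty hcone.subset hgp hσ
  obtain ⟨y, hy⟩ := exists_apply_eq_one_of_gcd_eq_one (σ i) (hprim i)
  obtain ⟨x, hx, hxi⟩ := hirr i
  obtain ⟨w, hwi, hwj⟩ := exists_apply_eq_zero_and_apply_pos σ hu hx hxi
  obtain ⟨K, hK⟩ := exists_forall_pos_add_smul σ y w
  have hzi : σ i (y + K • w) = 1 := by rw [map_add, map_zsmul, hy, hwi, smul_zero, add_zero]
  have hz : ∀ j, 0 < σ j (y + K • w) := fun j => by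
    rcases eq_or_ne j i with rfl | hj
    · exact hzi ▸ one_pos
    · exact hK j (hwj j hj)
  have hzcone : toR (y + K • w) ∈ coneOf (M : Set (Fin n → ℤ)) := by
    rw [hcone]
    intro j
    rw [realForm_toR]
    exact_mod_cast (hz j).le
  exact ⟨y + K • w, ⟨mem_of_toR_mem_coneOf hnorm hzcone, hz⟩, hzi⟩

/-- For a positive normal affine monoid `M ⊆ ℤⁿ` with `gp M = ℤⁿ` and
support forms `σ₁, …, σ_s`, for each index `i` there is `z ∈ relint M` with `σᵢ z = 1`. -/
theorem exists_relint_point_with_form_one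
    (n s : ℕ) (M : AddSubmonoid (Fin n → ℤ)) (hfg : M.FG)
    (hpos : ∀ a ∈ M, -a ∈ M → a = 0)
    (hnorm : ∀ (x : Fin n → ℤ) (k : ℕ), 0 < k → (k : ℤ) • x ∈ M → x ∈ M)
    (hgp : AddSubgroup.closure (M : Set (Fin n → ℤ)) = ⊤)
    (σ : Fin s → ((Fin n → ℤ) →ₗ[ℤ] ℤ))
    (hcone : coneOf (M : Set (Fin n → ℤ)) = {x | ∀ i, 0 ≤ realForm (σ i) x})
    (hirr : ∀ i, ∃ x : Fin n → ℝ,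
      (∀ j, j ≠ i → 0 ≤ realForm (σ j) x) ∧ realForm (σ i) x < 0)
    (hprim : ∀ i, Finset.univ.gcd (fun k => σ i (Pi.single k 1)) = 1) :
    ∀ i : Fin s, ∃ z ∈ relintM M σ, σ i z = 1 :=
  exists_relint_point_with_form_one_general n s M hnorm hgp σ hcone hirr hprim

end
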